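/- For every integer k and every open subset U of SL₂(ℝ) containing SO₂(ℝ), there exists a continuous function f : SL₂(ℝ) → ℂ with compact support contained in U such that f(1) = 1 and f(e(θ₁) · g · e(θ₂)) = e^{ik(θ₁+θ₂)} · f(g) for all g ∈ SL₂(ℝ) and all θ₁, θ₂ ∈ ℝ. -/

import Mathlib

/-!
For `g = [[a, b], [c, d]]` the complex number `w(g) = (a + d) + i(b - c)` satisfies
`w(e(θ₁) g e(θ₂)) = e^{i(θ₁+θ₂)} w(g)` and `|w(g)|² = (a - d)² + (b + c)² + 4`, so `|w| ≥ 2` on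
`SL₂(ℝ)` with equality exactly on `SO₂(ℝ)`, and the sublevel sets of `|w|` are compact. Hence
`f = φ(|w|) · (w / |w|)^k` works for a cutoff `φ` with `φ(2) = 1` supported in `[0, 2 + ε]`,
where `ε > 0` is small enough that `{|w| ≤ 2 + ε} ⊆ U`.
-/

open Real Matrix

/-- The rotation matrix `e(θ)` with rows `(cos θ, sin θ)` and `(-sin θ, cos θ)`. -/
noncomputable def rotMat (θ : ℝ) : Matrix (Fin 2) (Fin 2) ℝ :=
  !![Real.cos θ, Real.sin θ; -Real.sin θ, Real.cos θ]

theorem rotMat_det (θ : ℝ) : (rotMat θ).det = 1 := by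
  rw [rotMat, Matrix.det_fin_two_of]
  linear_combination Real.sin_sq_add_cos_sq θ

/-- The rotation `e(θ)` as an element of `SL₂(ℝ)`. -/
noncomputable def rotSL (θ : ℝ) : Matrix.SpecialLinearGroup (Fin 2) ℝ :=
  ⟨rotMat θ, rotMat_det θ⟩

/-- `SL₂(ℝ)` with the topology induced from the space of `2 × 2` real matrices. -/
instance : TopologicalSpace (Matrix.SpecialLinearGroup (Fin 2) ℝ) :=
  TopologicalSpace.induced (fun A => (A : Matrix (Fin 2) (Fin 2) ℝ)) inferInstance

open Set
open scoped MatrixGroups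

lemma exists_pos_sublevel_subset {X : Type*} [TopologicalSpace X] {ρ : X → ℝ}
    (hρ : Continuous ρ) {a b : ℝ} (hab : a < b) (hb : IsCompact {x | ρ x ≤ b})
    {U : Set X} (hU : IsOpen U) (haU : {x | ρ x ≤ a} ⊆ U) :
    ∃ ε > 0, {x | ρ x ≤ a + ε} ⊆ U := by
  obtain ⟨a', ha', hK⟩ := (hb.inter_right hU.isClosed_compl).exists_forall_le'
    hρ.continuousOn fun x hx => not_le.mp fun hxa => hx.2 (haU hxa)
  refine ⟨min (b - a) ((a' - a) / 2), lt_min (by linarith) (by linarith), fun x hx => ?_⟩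
  by_contra hxU
  have := hK x ⟨hx.out.trans (by linarith [min_le_left (b - a) ((a' - a) / 2)]), hxU⟩
  linarith [hx.out, min_le_right (b - a) ((a' - a) / 2)]

/-- `w(M)`: twice the coefficient of the `ℂ`-linear part of `v ↦ v M` on `ℝ² ≃ ℂ`. -/
def rotCoord (M : Matrix (Fin 2) (Fin 2) ℝ) : ℂ :=
  ⟨M 0 0 + M 1 1, M 0 1 - M 1 0⟩

lemma rotCoord_rotMat_mul (θ : ℝ) (M : Matrix (Fin 2) (Fin 2) ℝ) :
    rotCoord (rotMat θ * M) = Complex.exp (θ * Complex.I) * rotCoord M := by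
  rw [Complex.exp_mul_I]
  apply Complex.ext <;>
    simp [rotCoord, rotMat, Matrix.mul_apply, Fin.sum_univ_two, Complex.cos_ofReal_re,
      Complex.sin_ofReal_re, Complex.cos_ofReal_im, Complex.sin_ofReal_im] <;> ring

lemma rotCoord_mul_rotMat (θ : ℝ) (M : Matrix (Fin 2) (Fin 2) ℝ) :
    rotCoord (M * rotMat θ) = Complex.exp (θ * Complex.I) * rotCoord M := by
  rw [Complex.exp_mul_I]
  apply Complex.ext <;>
    simp [rotCoord, rotMat, Matrix.mul_apply, Fin.sum_univ_two, Complex.cos_ofReal_re,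
      Complex.sin_ofReal_re, Complex.cos_ofReal_im, Complex.sin_ofReal_im] <;> ring

lemma normSq_rotCoord_eq_add_four_det (M : Matrix (Fin 2) (Fin 2) ℝ) :
    Complex.normSq (rotCoord M) = (M 0 0 - M 1 1) ^ 2 + (M 0 1 + M 1 0) ^ 2 + 4 * M.det := by
  rw [rotCoord, Complex.normSq_mk, Matrix.det_fin_two]
  ring

lemma normSq_rotCoord_eq_add_two_det (M : Matrix (Fin 2) (Fin 2) ℝ) :
    Complex.normSq (rotCoord M) =
      M 0 0 ^ 2 + M 0 1 ^ 2 + M 1 0 ^ 2 + M 1 1 ^ 2 + 2 * M.det := by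
  rw [rotCoord, Complex.normSq_mk, Matrix.det_fin_two]
  ring

lemma two_le_norm_rotCoord (g : SL(2, ℝ)) : 2 ≤ ‖rotCoord g‖ := by
  have h := normSq_rotCoord_eq_add_four_det g
  rw [g.det_coe, ← Complex.sq_norm] at h
  nlinarith [norm_nonneg (rotCoord g), sq_nonneg (g 0 0 - g 1 1), sq_nonneg (g 0 1 + g 1 0)]

lemma sq_apply_le_sq_norm_rotCoord (g : SL(2, ℝ)) (i j : Fin 2) :
    g i j ^ 2 ≤ ‖rotCoord g‖ ^ 2 := by
  rw [Complex.sq_norm, normSq_rotCoord_eq_add_two_det, g.det_coe]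
  have := sq_nonneg (g 0 0); have := sq_nonneg (g 0 1)
  have := sq_nonneg (g 1 0); have := sq_nonneg (g 1 1)
  fin_cases i <;> fin_cases j <;> simp <;> linarith

lemma exists_eq_rotSL_of_norm_rotCoord_le_two {g : SL(2, ℝ)} (h : ‖rotCoord g‖ ≤ 2) :
    ∃ θ, g = rotSL θ := by
  have hsq := normSq_rotCoord_eq_add_four_det g
  rw [g.det_coe, ← Complex.sq_norm] at hsq
  have hsum : (g 0 0 - g 1 1) ^ 2 + (g 0 1 + g 1 0) ^ 2 = 0 := by
    nlinarith [norm_nonneg (rotCoord g), sq_nonneg (g 0 0 - g 1 1), sq_nonneg (g 0 1 + g 1 0)]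
  have hd : g 1 1 = g 0 0 := by nlinarith [sq_nonneg (g 0 0 - g 1 1), sq_nonneg (g 0 1 + g 1 0)]
  have hc : g 1 0 = -g 0 1 := by nlinarith [sq_nonneg (g 0 0 - g 1 1), sq_nonneg (g 0 1 + g 1 0)]
  have hnorm : ‖(⟨g 0 0, g 0 1⟩ : ℂ)‖ = 1 := by
    have hdet := g.det_coe
    rw [Matrix.det_fin_two, hd, hc] at hdet
    rw [← pow_left_inj₀ (norm_nonneg _) zero_le_one two_ne_zero, one_pow, Complex.sq_norm,
      Complex.normSq_mk]
    linarith
  obtain ⟨θ, hθ⟩ := (Complex.norm_eq_one_iff _).mp hnorm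
  have hcos : Real.cos θ = g 0 0 := by simpa using congr_arg Complex.re hθ
  have hsin : Real.sin θ = g 0 1 := by simpa using congr_arg Complex.im hθ
  refine ⟨θ, Subtype.ext ?_⟩
  ext i j
  fin_cases i <;> fin_cases j <;> simp [rotSL, rotMat, hcos, hsin, hd, hc]

lemma continuous_rotCoord : Continuous fun g : SL(2, ℝ) => rotCoord g :=
  Complex.equivRealProdCLM.symm.continuous.comp
    (by fun_prop : Continuous fun g : SL(2, ℝ) => (g 0 0 + g 1 1, g 0 1 - g 1 0))

lemma isCompact_norm_rotCoord_le (c : ℝ) :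
    IsCompact {g : SL(2, ℝ) | ‖rotCoord g‖ ≤ c} := by
  have hbox : IsCompact (univ.pi fun _ : Fin 2 => univ.pi fun _ : Fin 2 => Icc (-c) c) :=
    isCompact_univ_pi fun _ => isCompact_univ_pi fun _ => isCompact_Icc
  refine (SpecialLinearGroup.isClosedEmbedding_val.isCompact_preimage hbox).of_isClosed_subset
    (isClosed_le continuous_rotCoord.norm continuous_const) fun g hg i _ j _ => ?_
  exact abs_le_of_sq_le_sq' ((sq_apply_le_sq_norm_rotCoord g i j).trans
    (pow_le_pow_left₀ (norm_nonneg _) hg 2)) ((norm_nonneg _).trans hg)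

lemma rotCoord_rotSL_mul_mul_rotSL (θ₁ θ₂ : ℝ) (g : SL(2, ℝ)) :
    rotCoord ↑(rotSL θ₁ * g * rotSL θ₂) =
      Complex.exp (↑(θ₁ + θ₂) * Complex.I) * rotCoord g := by
  change rotCoord (rotMat θ₁ * g * rotMat θ₂) = _
  rw [rotCoord_mul_rotMat, rotCoord_rotMat_mul, ← mul_assoc, ← Complex.exp_add]
  congr 2
  push_cast
  ring

lemma rotCoord_one : rotCoord 1 = 2 := by
  apply Complex.ext <;> norm_num [rotCoord]

noncomputable def so2Bump (k : ℤ) (ε : ℝ) (g : SL(2, ℝ)) : ℂ :=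
  (max 0 (1 - (‖rotCoord g‖ - 2) / ε) : ℝ) * (rotCoord g / ‖rotCoord g‖) ^ k

lemma continuous_so2Bump (k : ℤ) (ε : ℝ) : Continuous (so2Bump k ε) := by
  have hne : ∀ g : SL(2, ℝ), rotCoord g ≠ 0 := fun g =>
    norm_pos_iff.mp (two_pos.trans_le (two_le_norm_rotCoord g))
  have hnorm : ∀ g : SL(2, ℝ), (‖rotCoord g‖ : ℂ) ≠ 0 := fun g => by simpa using hne g
  have hw := continuous_rotCoord
  have hphase : Continuous fun g : SL(2, ℝ) => (rotCoord g / ‖rotCoord g‖) ^ k :=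
    (hw.div (by fun_prop) hnorm).zpow₀ k fun g => .inl (div_ne_zero (hne g) (hnorm g))
  unfold so2Bump
  fun_prop

lemma tsupport_so2Bump_subset (k : ℤ) {ε : ℝ} (hε : 0 < ε) :
    tsupport (so2Bump k ε) ⊆ {g | ‖rotCoord g‖ ≤ 2 + ε} := by
  refine closure_minimal (fun g hg => ?_) (isClosed_le continuous_rotCoord.norm continuous_const)
  by_contra hgε
  have hcut : 1 - (‖rotCoord g‖ - 2) / ε ≤ 0 := by
    rw [sub_nonpos, le_div_iff₀ hε]
    linarith [(not_le.mp hgε : 2 + ε < ‖rotCoord g‖)]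
  exact hg (by simp [so2Bump, max_eq_left hcut])

lemma so2Bump_one (k : ℤ) (ε : ℝ) : so2Bump k ε 1 = 1 := by
  rw [so2Bump, Matrix.SpecialLinearGroup.coe_one, rotCoord_one]
  norm_num

lemma so2Bump_rotSL_mul_mul_rotSL (k : ℤ) (ε : ℝ) (g : SL(2, ℝ)) (θ₁ θ₂ : ℝ) :
    so2Bump k ε (rotSL θ₁ * g * rotSL θ₂) =
      Complex.exp (Complex.I * k * (θ₁ + θ₂)) * so2Bump k ε g := by
  have hnorm : ‖rotCoord ↑(rotSL θ₁ * g * rotSL θ₂)‖ = ‖rotCoord g‖ := by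
    rw [rotCoord_rotSL_mul_mul_rotSL, norm_mul, Complex.norm_exp_ofReal_mul_I, one_mul]
  have hexp : Complex.exp (↑(θ₁ + θ₂) * Complex.I) ^ k =
      Complex.exp (Complex.I * k * (θ₁ + θ₂)) := by
    rw [← Complex.exp_int_mul]
    push_cast
    ring_nf
  rw [so2Bump, so2Bump, hnorm, rotCoord_rotSL_mul_mul_rotSL, mul_div_assoc, mul_zpow, hexp]
  ring

/-- For every integer `k` and every open neighbourhood `U` of `SO₂(ℝ)` in `SL₂(ℝ)` there is a
continuous, compactly supported function `f : SL₂(ℝ) → ℂ` with support contained in `U`,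
with `f(1) = 1`, transforming under `SO₂(ℝ)` on both sides by the character `e(θ) ↦ e^{ikθ}`. -/
theorem exists_so2_equivariant_bump (k : ℤ) (U : Set (Matrix.SpecialLinearGroup (Fin 2) ℝ))
    (hU : IsOpen U) (hSO : {g : Matrix.SpecialLinearGroup (Fin 2) ℝ | ∃ θ : ℝ, g = rotSL θ} ⊆ U) :
    ∃ f : Matrix.SpecialLinearGroup (Fin 2) ℝ → ℂ,
      Continuous f ∧ HasCompactSupport f ∧ tsupport f ⊆ U ∧ f 1 = 1 ∧
      ∀ (g : Matrix.SpecialLinearGroup (Fin 2) ℝ) (θ₁ θ₂ : ℝ),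
        f (rotSL θ₁ * g * rotSL θ₂) = Complex.exp (Complex.I * k * (θ₁ + θ₂)) * f g := by
  obtain ⟨ε, hε, hεU⟩ := exists_pos_sublevel_subset continuous_rotCoord.norm
    (lt_add_one 2) (isCompact_norm_rotCoord_le _) hU
    fun g hg => hSO (exists_eq_rotSL_of_norm_rotCoord_le_two hg)
  have hsupp := tsupport_so2Bump_subset k hε
  exact ⟨so2Bump k ε, continuous_so2Bump k ε,
    (isCompact_norm_rotCoord_le _).of_isClosed_subset (isClosed_tsupport _) hsupp,
    hsupp.trans hεU, so2Bump_one k ε, so2Bump_rotSL_mul_mul_rotSL k ε⟩
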